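/- Let ℒ = (V,E) be a 3-valent hypergraph equipped with a family of edge operators K_e whose triangle operators are all of Z-type, and form the derived solid and dashed link operators K'. Then for every cycle M ⊆ E, the loop operator W(M) = Σ_{e∈M} K_e satisfies ω(W(M), K') = 0 for every solid link operator and every dashed link operator K'. (Every loop operator lies in the centralizer of the gauge group generated by the two-qubit link operators of the derived lattice.) -/

import Mathlib

/-!
Every edge operator `K e` pairs with a link operator supported on `s` (a solid link, or a pair
`{u, v}` of vertices of a triangle) to `#(s ∩ e)` mod 2. For solid links this is the
anticommutation rule; for dashed links it holds because an edge meeting a `Z`-type triangle `t`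
has nonzero `X`-part at the common vertex, as it anticommutes with `K t` and overlaps it only
there, while `K t` itself commutes with `Z`'s. Summing over a cycle `M`, `ω(W(M), ·)` therefore
counts the incidences between `s` and the edges of `M`, i.e. the sum of the `M`-degrees of the
vertices of `s`, which is even.
-/

open Finset

/-- The symplectic form `ω` on Pauli operators modulo phase, modeled as vectors in
`(F₂ × F₂)^V`. -/
def omegaForm {V : Type*} [Fintype V] (P Q : V → ZMod 2 × ZMod 2) : ZMod 2 :=
  ∑ u : V, ((P u).1 * (Q u).2 + (P u).2 * (Q u).1)

/-- The dashed link operator associated to a pair of vertices `u, v` of a triangle: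
it equals `(0,1)` (a Pauli `Z`) at `u` and at `v` and vanishes elsewhere. -/
def dashedOp {V : Type*} [DecidableEq V] (u v : V) : V → ZMod 2 × ZMod 2 :=
  fun w => if w = u ∨ w = v then ((0 : ZMod 2), (1 : ZMod 2)) else 0

section Symplectic

variable {V : Type*} [Fintype V]

lemma omegaForm_self (P : V → ZMod 2 × ZMod 2) : omegaForm P P = 0 :=
  sum_eq_zero fun u _ => by rw [mul_comm (P u).2]; exact CharTwo.add_self_eq_zero _

lemma omegaForm_sum_left {ι : Type*} (s : Finset ι) (P : ι → V → ZMod 2 × ZMod 2)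
    (Q : V → ZMod 2 × ZMod 2) :
    omegaForm (∑ i ∈ s, P i) Q = ∑ i ∈ s, omegaForm (P i) Q := by
  unfold omegaForm
  rw [sum_comm]
  refine sum_congr rfl fun u _ => ?_
  simp only [Finset.sum_apply, Prod.fst_sum, Prod.snd_sum, sum_mul, sum_add_distrib]

lemma omegaForm_eq_sum_fst_of_zType [DecidableEq V] (P Q : V → ZMod 2 × ZMod 2) (s : Finset V)
    (hQ : ∀ w, Q w = if w ∈ s then (0, 1) else 0) :
    omegaForm P Q = ∑ w ∈ s, (P w).1 := by
  unfold omegaForm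
  rw [← sum_subset (subset_univ s) fun w _ hw => by simp [hQ, hw]]
  exact sum_congr rfl fun w hw => by simp [hQ, hw]

lemma omegaForm_dashedOp [DecidableEq V] (P : V → ZMod 2 × ZMod 2) {u v : V} (huv : u ≠ v) :
    omegaForm P (dashedOp u v) = (P u).1 + (P v).1 := by
  rw [omegaForm_eq_sum_fst_of_zType P _ {u, v} fun w => by simp [dashedOp], sum_pair huv]

end Symplectic

lemma sum_card_inter_eq_zero_of_even {V : Type*} [DecidableEq V] {M : Finset (Finset V)}
    (hcyc : ∀ v : V, Even #{e ∈ M | v ∈ e}) (s : Finset V) :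
    ∑ e ∈ M, (#(s ∩ e) : ZMod 2) = 0 := by
  have hcount : ∑ e ∈ M, #(s ∩ e) = ∑ w ∈ s, #{e ∈ M | w ∈ e} := by
    simp_rw [← filter_mem_eq_inter, card_eq_sum_ones, sum_filter]
    exact sum_comm
  rw [← Nat.cast_sum, hcount, Nat.cast_sum]
  exact sum_eq_zero fun w _ => ZMod.natCast_eq_zero_iff_even.mpr (hcyc w)

lemma omegaForm_sum_eq_zero_of_even {V : Type*} [Fintype V] [DecidableEq V]
    {M : Finset (Finset V)} (hcyc : ∀ v : V, Even #{e ∈ M | v ∈ e})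
    (K : Finset V → V → ZMod 2 × ZMod 2) (L : V → ZMod 2 × ZMod 2) (s : Finset V)
    (hL : ∀ e ∈ M, omegaForm (K e) L = #(s ∩ e)) :
    omegaForm (∑ e ∈ M, K e) L = 0 := by
  rw [omegaForm_sum_left, sum_congr rfl hL, sum_card_inter_eq_zero_of_even hcyc]

lemma edgeOp_eq_zero_of_notMem {V : Type*} {E : Finset (Finset V)}
    {K : Finset V → V → ZMod 2 × ZMod 2} (hsupp : ∀ e ∈ E, ∀ u : V, K e u ≠ 0 ↔ u ∈ e)
    {e : Finset V} (he : e ∈ E) {u : V} (hu : u ∉ e) : K e u = 0 :=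
  not_ne_iff.mp fun h => hu ((hsupp e he u).mp h)

section EdgeOperators

variable {V : Type*} [Fintype V] [DecidableEq V] {E : Finset (Finset V)}
  {K : Finset V → V → ZMod 2 × ZMod 2}

lemma omegaForm_edgeOp_link
    (hint : ∀ e ∈ E, ∀ e' ∈ E, e ≠ e' → (e ∩ e').card ≤ 1)
    (hKcomm : ∀ e ∈ E, ∀ e' ∈ E, e ≠ e' →
      omegaForm (K e) (K e') = if (e ∩ e').card = 1 then 1 else 0)
    {e e' : Finset V} (he : e ∈ E) (he' : e' ∈ E) (hlink : e.card = 2) :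
    omegaForm (K e') (K e) = #(e ∩ e') := by
  by_cases h : e' = e
  · subst h
    rw [omegaForm_self, inter_self, hlink]
    rfl
  · rw [hKcomm e' he' e he h, inter_comm]
    have := hint e he e' he' (Ne.symm h)
    interval_cases #(e ∩ e') <;> simp

lemma fst_edgeOp_eq_one_of_mem_triangle
    (hint : ∀ e ∈ E, ∀ e' ∈ E, e ≠ e' → (e ∩ e').card ≤ 1)
    (hsupp : ∀ e ∈ E, ∀ u : V, K e u ≠ 0 ↔ u ∈ e)
    (hKcomm : ∀ e ∈ E, ∀ e' ∈ E, e ≠ e' →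
      omegaForm (K e) (K e') = if (e ∩ e').card = 1 then 1 else 0)
    (hZ : ∀ t ∈ E, t.card = 3 → ∀ u ∈ t, K t u = ((0 : ZMod 2), (1 : ZMod 2)))
    {e t : Finset V} (he : e ∈ E) (ht : t ∈ E) (htcard : t.card = 3) (hne : e ≠ t)
    {w : V} (hwe : w ∈ e) (hwt : w ∈ t) :
    (K e w).1 = 1 := by
  have hmeet : t ∩ e = {w} := by
    refine eq_singleton_iff_unique_mem.mpr ⟨mem_inter.mpr ⟨hwt, hwe⟩, fun x hx => ?_⟩
    have := hint t ht e he (Ne.symm hne)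
    exact card_le_one.mp this x hx w (mem_inter.mpr ⟨hwt, hwe⟩)
  have hKt : ∀ x, K t x = if x ∈ t then (0, 1) else 0 := fun x => by
    split_ifs with hx
    exacts [hZ t ht htcard x hx, edgeOp_eq_zero_of_notMem hsupp ht hx]
  have hsum : ∑ x ∈ t, (K e x).1 = (K e w).1 := by
    rw [← sum_filter_of_ne (p := (· ∈ e)) fun x _ hx => ?_, filter_mem_eq_inter, hmeet,
      sum_singleton]
    by_contra hxe
    exact hx (by rw [edgeOp_eq_zero_of_notMem hsupp he hxe]; rfl)
  have hcomm := hKcomm e he t ht hne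
  rwa [inter_comm, hmeet, card_singleton, if_pos rfl, omegaForm_eq_sum_fst_of_zType _ _ t hKt,
    hsum] at hcomm

lemma omegaForm_edgeOp_dashedOp
    (hint : ∀ e ∈ E, ∀ e' ∈ E, e ≠ e' → (e ∩ e').card ≤ 1)
    (hsupp : ∀ e ∈ E, ∀ u : V, K e u ≠ 0 ↔ u ∈ e)
    (hKcomm : ∀ e ∈ E, ∀ e' ∈ E, e ≠ e' →
      omegaForm (K e) (K e') = if (e ∩ e').card = 1 then 1 else 0)
    (hZ : ∀ t ∈ E, t.card = 3 → ∀ u ∈ t, K t u = ((0 : ZMod 2), (1 : ZMod 2)))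
    {e t : Finset V} (he : e ∈ E) (ht : t ∈ E) (htcard : t.card = 3)
    {u v : V} (hu : u ∈ t) (hv : v ∈ t) (huv : u ≠ v) :
    omegaForm (K e) (dashedOp u v) = #({u, v} ∩ e) := by
  rw [omegaForm_dashedOp _ huv, ← filter_mem_eq_inter, card_filter, Nat.cast_sum, sum_pair huv]
  by_cases h : e = t
  · subst h
    simp only [hZ e he htcard u hu, hZ e he htcard v hv, hu, hv, if_true, Nat.cast_one]
    decide
  · have hfst : ∀ w ∈ t, (K e w).1 = ((if w ∈ e then 1 else 0 : ℕ) : ZMod 2) := fun w hw => by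
      split_ifs with hwe
      · exact fst_edgeOp_eq_one_of_mem_triangle hint hsupp hKcomm hZ he ht htcard h hwe hw
      · rw [edgeOp_eq_zero_of_notMem hsupp he hwe]
        rfl
    rw [hfst u hu, hfst v hv]

end EdgeOperators

theorem stmt7_general {V : Type*} [Fintype V] [DecidableEq V]
    (E : Finset (Finset V))
    (hint : ∀ e ∈ E, ∀ e' ∈ E, e ≠ e' → (e ∩ e').card ≤ 1)
    (K : Finset V → V → ZMod 2 × ZMod 2)
    (hsupp : ∀ e ∈ E, ∀ u : V, K e u ≠ 0 ↔ u ∈ e)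
    (hKcomm : ∀ e ∈ E, ∀ e' ∈ E, e ≠ e' →
      omegaForm (K e) (K e') = if (e ∩ e').card = 1 then 1 else 0)
    (hZ : ∀ t ∈ E, t.card = 3 → ∀ u ∈ t, K t u = ((0 : ZMod 2), (1 : ZMod 2)))
    (M : Finset (Finset V)) (hME : M ⊆ E)
    (hcyc : ∀ v : V, Even ((M.filter (fun e => v ∈ e)).card)) :
    (∀ e ∈ E, e.card = 2 → omegaForm (∑ e' ∈ M, K e') (K e) = 0) ∧
    (∀ t ∈ E, t.card = 3 → ∀ u ∈ t, ∀ v ∈ t, u ≠ v →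
      omegaForm (∑ e' ∈ M, K e') (dashedOp u v) = 0) := by
  refine ⟨fun e he hlink => ?_, fun t ht htcard u hu v hv huv => ?_⟩
  · exact omegaForm_sum_eq_zero_of_even hcyc K (K e) e fun e' he' =>
      omegaForm_edgeOp_link hint hKcomm he (hME he') hlink
  · exact omegaForm_sum_eq_zero_of_even hcyc K (dashedOp u v) {u, v} fun e' he' =>
      omegaForm_edgeOp_dashedOp hint hsupp hKcomm hZ (hME he') ht htcard hu hv huv

/-- Let `(V, E)` be a finite 3-valent hypergraph (edges of size 2 or 3, every
vertex in exactly three edges, distinct edges share at most one vertex, distinct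
triangles disjoint) equipped with edge operators `K` (supported exactly on their
edge, two distinct edge operators anticommuting iff their edges share exactly one
vertex) whose triangle operators are of `Z`-type: `K t u = (0,1)` for every
triangle `t` and `u ∈ t`.  Then for every cycle `M ⊆ E` the loop operator
`W(M) = ∑_{e ∈ M} K e` commutes with every solid link operator `K e` (`e` a link
of `E`) and with every dashed link operator obtained by restricting a triangle
operator to two of its vertices: every loop operator lies in the centralizer of
the gauge group generated by the two-qubit link operators of the derived
lattice. -/
theorem stmt7 {V : Type*} [Fintype V] [DecidableEq V]
    (E : Finset (Finset V))
    (hcard : ∀ e ∈ E, e.card = 2 ∨ e.card = 3)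
    (hreg : ∀ v : V, (E.filter (fun e => v ∈ e)).card = 3)
    (hint : ∀ e ∈ E, ∀ e' ∈ E, e ≠ e' → (e ∩ e').card ≤ 1)
    (htri : ∀ e ∈ E, ∀ e' ∈ E, e ≠ e' → e.card = 3 → e'.card = 3 → e ∩ e' = ∅)
    (K : Finset V → V → ZMod 2 × ZMod 2)
    (hsupp : ∀ e ∈ E, ∀ u : V, K e u ≠ 0 ↔ u ∈ e)
    (hKcomm : ∀ e ∈ E, ∀ e' ∈ E, e ≠ e' →
      omegaForm (K e) (K e') = if (e ∩ e').card = 1 then 1 else 0)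
    (hZ : ∀ t ∈ E, t.card = 3 → ∀ u ∈ t, K t u = ((0 : ZMod 2), (1 : ZMod 2)))
    (M : Finset (Finset V)) (hME : M ⊆ E)
    (hcyc : ∀ v : V, Even ((M.filter (fun e => v ∈ e)).card)) :
    (∀ e ∈ E, e.card = 2 → omegaForm (∑ e' ∈ M, K e') (K e) = 0) ∧
    (∀ t ∈ E, t.card = 3 → ∀ u ∈ t, ∀ v ∈ t, u ≠ v →
      omegaForm (∑ e' ∈ M, K e') (dashedOp u v) = 0) :=
  stmt7_general E hint K hsupp hKcomm hZ M hME hcyc
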